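/- arXiv:2312.01400 — 3 statements merged into one kernel-verified Lean document; each statement's English description precedes it below -/
import Mathlib

section
/- Let m be even and let A and B be real tensors of order m and dimension n. If {A,B} is a P tensor pair, then for every nonzero x ∈ ℝ^n one has A x^{m-1} ≠ 0 and B x^{m-1} ≠ 0; in particular, neither A nor B has 0 as an H-eigenvalue or as a Z-eigenvalue. -/
open Finset

/-- A real tensor of order `m` and dimension `n`, indexed by a first index in `Fin n`
and `m - 1` further indices in `Fin n`. -/
abbrev Tensor (m n : ℕ) : Type := Fin n → (Fin (m - 1) → Fin n) → ℝ

/-- `tApp A x` is the vector `A x^{m-1}` with `i`-th component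
`∑_{i₂,…,i_m} a_{i i₂ … i_m} x_{i₂} ⋯ x_{i_m}`. -/
noncomputable def tApp {m n : ℕ} (A : Tensor m n) (x : Fin n → ℝ) : Fin n → ℝ :=
  fun i => ∑ j : Fin (m - 1) → Fin n, A i j * ∏ k, x (j k)

/-- The identity tensor: entries `1` when all indices coincide, `0` otherwise,
so that `tApp (idT m n) x = x^{[m-1]}`. -/
def idT (m n : ℕ) : Tensor m n :=
  fun i j => if (∀ k, j k = i) then 1 else 0

/-- The solution set of the horizontal tensor complementarity problem HTCP(A,B,q). -/
def SOL {m n : ℕ} (A B : Tensor m n) (q : Fin n → ℝ) :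
    Set ((Fin n → ℝ) × (Fin n → ℝ)) :=
  {p | p.1 ⊓ p.2 = 0 ∧ tApp A p.1 - tApp B p.2 = q}

/-- `{A,B}` is an R0 tensor pair. -/
def R0Pair {m n : ℕ} (A B : Tensor m n) : Prop :=
  ∀ x y : Fin n → ℝ, x ⊓ y = 0 → tApp A x - tApp B y = 0 → x = 0 ∧ y = 0

/-- `{A,B}` is a P tensor pair. -/
def PPair {m n : ℕ} (A B : Tensor m n) : Prop :=
  ∀ x y : Fin n → ℝ, x * y ≤ 0 → tApp A x - tApp B y = 0 → x = 0 ∧ y = 0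

/-- `l` is an H-eigenvalue of `A`: `A x^{m-1} = l x^{[m-1]}` for some nonzero `x`. -/
def HEigenvalue {m n : ℕ} (A : Tensor m n) (l : ℝ) : Prop :=
  ∃ x : Fin n → ℝ, x ≠ 0 ∧ tApp A x = l • fun i => x i ^ (m - 1)

/-- `l` is a Z-eigenvalue of `A`: `A x^{m-1} = l x` for some `x` with `xᵀx = 1`. -/
def ZEigenvalue {m n : ℕ} (A : Tensor m n) (l : ℝ) : Prop :=
  ∃ x : Fin n → ℝ, dotProduct x x = 1 ∧ tApp A x = l • x

section

variable {m n : ℕ}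

lemma tApp_zero (hm : 2 ≤ m) (A : Tensor m n) : tApp A 0 = 0 := by
  funext i
  have hpow : (0 : ℝ) ^ (m - 1) = 0 := zero_pow (by omega)
  simp [tApp, hpow]

lemma hEigenvalue_zero_iff {A : Tensor m n} : HEigenvalue A 0 ↔ ∃ x ≠ 0, tApp A x = 0 := by
  simp [HEigenvalue]

lemma ZEigenvalue.hEigenvalue_zero {A : Tensor m n} (hA : ZEigenvalue A 0) :
    HEigenvalue A 0 := by
  obtain ⟨x, hx, hAx⟩ := hA
  refine hEigenvalue_zero_iff.2 ⟨x, ?_, by simpa using hAx⟩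
  rintro rfl
  simp at hx

namespace PPair

variable {A B : Tensor m n}

lemma tApp_left_ne_zero (h : PPair A B) (hm : 2 ≤ m) {x : Fin n → ℝ} (hx : x ≠ 0) :
    tApp A x ≠ 0 := fun hAx =>
  hx (h x 0 (by simp) (by rw [hAx, tApp_zero hm, sub_zero])).1

lemma tApp_right_ne_zero (h : PPair A B) (hm : 2 ≤ m) {x : Fin n → ℝ} (hx : x ≠ 0) :
    tApp B x ≠ 0 := fun hBx =>
  hx (h 0 x (by simp) (by rw [hBx, tApp_zero hm, sub_zero])).2

end PPair

lemma not_hEigenvalue_zero {A : Tensor m n} (hA : ∀ x : Fin n → ℝ, x ≠ 0 → tApp A x ≠ 0) :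
    ¬ HEigenvalue A 0 := by
  rw [hEigenvalue_zero_iff]
  rintro ⟨x, hx, hAx⟩
  exact hA x hx hAx

end

theorem pPair_no_zero_eigenvalues_general (m n : ℕ) (hm : 2 ≤ m)
    (A B : Tensor m n) (h : PPair A B) :
    (∀ x : Fin n → ℝ, x ≠ 0 → tApp A x ≠ 0 ∧ tApp B x ≠ 0) ∧
      ¬ HEigenvalue A 0 ∧ ¬ HEigenvalue B 0 ∧ ¬ ZEigenvalue A 0 ∧ ¬ ZEigenvalue B 0 := by
  have hA : ¬ HEigenvalue A 0 := not_hEigenvalue_zero fun _ hx => h.tApp_left_ne_zero hm hx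
  have hB : ¬ HEigenvalue B 0 := not_hEigenvalue_zero fun _ hx => h.tApp_right_ne_zero hm hx
  exact ⟨fun _ hx => ⟨h.tApp_left_ne_zero hm hx, h.tApp_right_ne_zero hm hx⟩,
    hA, hB, mt ZEigenvalue.hEigenvalue_zero hA, mt ZEigenvalue.hEigenvalue_zero hB⟩

/-- for even `m`, a P tensor pair `{A,B}` has `A x^{m-1} ≠ 0` and
`B x^{m-1} ≠ 0` for all nonzero `x`; in particular neither tensor has `0` as an
H-eigenvalue or a Z-eigenvalue. -/
theorem pPair_no_zero_eigenvalues (m n : ℕ) (hm : 2 ≤ m) (hn : 1 ≤ n) (hme : Even m)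
    (A B : Tensor m n) (h : PPair A B) :
    (∀ x : Fin n → ℝ, x ≠ 0 → tApp A x ≠ 0 ∧ tApp B x ≠ 0) ∧
      ¬ HEigenvalue A 0 ∧ ¬ HEigenvalue B 0 ∧ ¬ ZEigenvalue A 0 ∧ ¬ ZEigenvalue B 0 :=
  pPair_no_zero_eigenvalues_general m n hm A B h
end

section
/- Let m be even and let A and B be real tensors of order m and dimension n. If {A,B} is a P tensor pair, then A has no negative B-eigenvalue; that is, if λ ∈ ℝ and x ∈ ℝ^n is nonzero with A x^{m-1} − λ B x^{m-1} = 0, then λ ≥ 0. -/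
/-
If `A x^{m-1} = λ B x^{m-1}` with `λ < 0`, take the real odd root `μ < 0` of `λ` (possible since
`m - 1` is odd). Homogeneity gives `A x^{m-1} = B (μ x)^{m-1}`, while `x * (μ x) = μ x² ≤ 0`, so the
P property forces `x = 0`.
-/

open Finset

theorem tApp_smul {m n : ℕ} (A : Tensor m n) (c : ℝ) (x : Fin n → ℝ) :
    tApp A (c • x) = c ^ (m - 1) • tApp A x := by
  funext i
  simp only [tApp, Pi.smul_apply, smul_eq_mul, Finset.mul_sum, Finset.prod_mul_distrib,
    Finset.prod_const, Finset.card_univ, Fintype.card_fin]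
  exact Finset.sum_congr rfl fun _ _ => by ring

theorem Real.exists_neg_pow_eq_of_odd {k : ℕ} (hk : Odd k) {l : ℝ} (hl : l < 0) :
    ∃ μ < 0, μ ^ k = l := by
  refine ⟨-(-l) ^ (k⁻¹ : ℝ), neg_lt_zero.2 (Real.rpow_pos_of_pos (neg_pos.2 hl) _), ?_⟩
  rw [hk.neg_pow, Real.rpow_inv_natCast_pow (neg_nonneg.2 hl.le) hk.pos.ne',
    neg_neg]

theorem PPair.eigenvalue_nonneg {m n : ℕ} (hm : Odd (m - 1)) {A B : Tensor m n} (h : PPair A B)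
    {l : ℝ} {x : Fin n → ℝ} (hx : x ≠ 0) (hAx : tApp A x - l • tApp B x = 0) : 0 ≤ l := by
  by_contra! hl
  obtain ⟨μ, hμ, hμl⟩ := Real.exists_neg_pow_eq_of_odd hm hl
  have hsign : x * (μ • x) ≤ 0 := fun i => by
    simpa [mul_left_comm] using mul_nonpos_of_nonpos_of_nonneg hμ.le (mul_self_nonneg (x i))
  have hsol : tApp A x - tApp B (μ • x) = 0 := by rwa [tApp_smul, hμl]
  exact hx (h x (μ • x) hsign hsol).1

theorem pPair_no_negative_B_eigenvalue_general (m n : ℕ) (hm : 2 ≤ m)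
    (hme : Even m) (A B : Tensor m n) (h : PPair A B) :
    ∀ (l : ℝ) (x : Fin n → ℝ), x ≠ 0 → tApp A x - l • tApp B x = 0 → 0 ≤ l :=
  fun _ _ hx hAx => h.eigenvalue_nonneg (Nat.Even.sub_odd (by omega) hme odd_one) hx hAx

/-- for even `m`, a P tensor pair `{A,B}` admits no negative
B-eigenvalue of `A`. -/
theorem pPair_no_negative_B_eigenvalue (m n : ℕ) (hm : 2 ≤ m) (hn : 1 ≤ n)
    (hme : Even m) (A B : Tensor m n) (h : PPair A B) :
    ∀ (l : ℝ) (x : Fin n → ℝ), x ≠ 0 → tApp A x - l • tApp B x = 0 → 0 ≤ l :=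
  pPair_no_negative_B_eigenvalue_general m n hm hme A B h
end

section
/- Let B be a real tensor of order m and dimension n and let 𝓘 be the identity tensor of order m and dimension n. Then B is a strong P tensor if and only if {𝓘, B} is a strong P tensor pair. -/
open Finset

/-- `{A,B}` is a strong P tensor pair. -/
def StrongPPair {m n : ℕ} (A B : Tensor m n) : Prop :=
  ∀ x1 x2 y1 y2 : Fin n → ℝ,
    (x1 - x2) * (y1 - y2) ≤ 0 →
    (tApp A x1 - tApp A x2) - (tApp B y1 - tApp B y2) = 0 →
    x1 = x2 ∧ y1 = y2

/-- `B` is a strong P tensor. -/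
def StrongPTensor {m n : ℕ} (B : Tensor m n) : Prop :=
  ∀ x1 x2 : Fin n → ℝ, (x1 - x2) * (tApp B x1 - tApp B x2) ≤ 0 → x1 = x2


/-!
For odd `m - 1` the identity tensor acts coordinatewise by the order isomorphism `t ↦ t ^ (m - 1)`
of `ℝ`. An order isomorphism preserves the sign of differences, so `(x₁ - x₂) * (y₁ - y₂) ≤ 0` with
`x₁^{[m-1]} - x₂^{[m-1]} = B y₁^{m-1} - B y₂^{m-1}` forces
`(y₁ - y₂) * (B y₁^{m-1} - B y₂^{m-1}) ≤ 0`, and conversely any pair `y₁, y₂` can be completed by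
taking `(m-1)`-th roots of `B y₁^{m-1}` and `B y₂^{m-1}`. For even `m - 1` both properties fail,
witnessed by the vectors `1` and `-1`, which every tensor of this order maps to the same vector.
-/

lemma mul_sub_nonpos_of_monotone {f : ℝ → ℝ} (hf : Monotone f) {a b c : ℝ}
    (h : (a - b) * c ≤ 0) : c * (f a - f b) ≤ 0 := by
  rcases lt_trichotomy a b with hab | rfl | hab
  · have hc : 0 ≤ c := nonneg_of_mul_nonpos_right h (sub_neg.2 hab)
    exact mul_nonpos_of_nonneg_of_nonpos hc (sub_nonpos.2 (hf hab.le))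
  · simp
  · have hc : c ≤ 0 := nonpos_of_mul_nonpos_right h (sub_pos.2 hab)
    exact mul_nonpos_of_nonpos_of_nonneg hc (sub_nonneg.2 (hf hab.le))

theorem strongP_iff_strongPPair_orderIso {ι : Type*} (e : ℝ ≃o ℝ) (G : (ι → ℝ) → ι → ℝ) :
    (∀ y1 y2, (y1 - y2) * (G y1 - G y2) ≤ 0 → y1 = y2) ↔
      ∀ x1 x2 y1 y2 : ι → ℝ, (x1 - x2) * (y1 - y2) ≤ 0 →
        ((fun i => e (x1 i)) - fun i => e (x2 i)) - (G y1 - G y2) = 0 →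
        x1 = x2 ∧ y1 = y2 := by
  constructor
  · intro hG x1 x2 y1 y2 hxy heq
    have hGe : G y1 - G y2 = (fun i => e (x1 i)) - fun i => e (x2 i) := (sub_eq_zero.1 heq).symm
    have hy : y1 = y2 := hG y1 y2 fun i => by
      rw [hGe]
      exact mul_sub_nonpos_of_monotone e.monotone (hxy i)
    subst hy
    rw [sub_self, eq_comm, sub_eq_zero] at hGe
    exact ⟨funext fun i => e.injective (congrFun hGe i), rfl⟩
  · intro hpair y1 y2 hy
    refine (hpair (fun i => e.symm (G y1 i)) (fun i => e.symm (G y2 i)) y1 y2 (fun i => ?_) ?_).2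
    · rw [Pi.mul_apply, mul_comm]
      exact mul_sub_nonpos_of_monotone e.symm.monotone (by rw [mul_comm]; exact hy i)
    · simp only [OrderIso.apply_symm_apply]
      exact sub_self _

noncomputable def Odd.powOrderIso {k : ℕ} (hk : Odd k) : ℝ ≃o ℝ :=
  StrictMono.orderIsoOfSurjective (· ^ k) hk.strictMono_pow fun c => by
    have hk0 : k ≠ 0 := by rintro rfl; simp at hk
    rcases le_or_gt 0 c with hc | hc
    · exact ⟨c ^ (k⁻¹ : ℝ), Real.rpow_inv_natCast_pow hc hk0⟩
    · refine ⟨-((-c) ^ (k⁻¹ : ℝ)), ?_⟩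
      dsimp only
      rw [hk.neg_pow, Real.rpow_inv_natCast_pow (neg_nonneg.2 hc.le) hk0, neg_neg]

lemma tApp_idT {m n : ℕ} (x : Fin n → ℝ) : tApp (idT m n) x = fun i => x i ^ (m - 1) := by
  funext i
  rw [tApp, sum_eq_single (fun _ => i)]
  · simp [idT]
  · intro j _ hj
    rw [idT, if_neg fun h => hj (funext h), zero_mul]
  · exact fun h => absurd (mem_univ _) h

lemma tApp_neg {m n : ℕ} (A : Tensor m n) (x : Fin n → ℝ) :
    tApp A (-x) = (-1 : ℝ) ^ (m - 1) • tApp A x := by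
  funext i
  simp only [tApp, Pi.neg_apply, prod_neg, card_univ, Fintype.card_fin,
    Pi.smul_apply, smul_eq_mul, mul_sum]
  exact sum_congr rfl fun _ _ => by ring

lemma tApp_neg_of_even {m n : ℕ} (hm : Even (m - 1)) (A : Tensor m n) (x : Fin n → ℝ) :
    tApp A (-x) = tApp A x := by
  rw [tApp_neg, hm.neg_one_pow, one_smul]

lemma one_ne_neg_one_of_pos {n : ℕ} (hn : 0 < n) : (1 : Fin n → ℝ) ≠ -1 := fun h => by
  have := congrFun h ⟨0, hn⟩
  norm_num at this

lemma not_strongPTensor_of_even {m n : ℕ} (hn : 0 < n) (hm : Even (m - 1)) (B : Tensor m n) :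
    ¬ StrongPTensor B := fun hB =>
  one_ne_neg_one_of_pos hn <| hB 1 (-1) <| by rw [tApp_neg_of_even hm, sub_self, mul_zero]

lemma not_strongPPair_of_even {m n : ℕ} (hn : 0 < n) (hm : Even (m - 1)) (A B : Tensor m n) :
    ¬ StrongPPair A B := fun hAB =>
  one_ne_neg_one_of_pos hn <| (hAB 1 (-1) 0 0 (by rw [sub_self, mul_zero])
    (by rw [tApp_neg_of_even hm, sub_self, sub_self, sub_self])).1

theorem strongPTensor_iff_strongPPair_id_general (m n : ℕ) (hn : 1 ≤ n)
    (B : Tensor m n) : StrongPTensor B ↔ StrongPPair (idT m n) B := by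
  rcases Nat.even_or_odd (m - 1) with hm | hm
  · exact iff_of_false (not_strongPTensor_of_even hn hm B) (not_strongPPair_of_even hn hm _ B)
  · simp only [StrongPPair, tApp_idT]
    exact strongP_iff_strongPPair_orderIso hm.powOrderIso (tApp B)

/-- `B` is a strong P tensor iff `{𝓘, B}` is a strong P tensor pair. -/
theorem strongPTensor_iff_strongPPair_id (m n : ℕ) (hm : 2 ≤ m) (hn : 1 ≤ n)
    (B : Tensor m n) : StrongPTensor B ↔ StrongPPair (idT m n) B :=
  strongPTensor_iff_strongPPair_id_general m n hn B
end
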